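/- arXiv:math/0602550 — 2 statements merged into one kernel-verified Lean document; each statement's English description precedes it below -/
import Mathlib

section
/- Let R̂ denote the 𝔪-adic completion of R. An ideal I of R containing 𝐮R belongs to 𝓘(R,𝐮) if and only if the extended ideal I·R̂ belongs to 𝓘(R̂,𝐮), where 𝓘(R̂,𝐮) is defined using the images of u₁, …, uₙ in R̂. -/
open IsLocalRing

/-- The bracket power `J^{[q]}` of an ideal `J`: the ideal generated by the
`q`-th powers of the elements of `J`. -/
def Ideal.bracketPow {R : Type*} [CommRing R] (J : Ideal R) (q : ℕ) : Ideal R :=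
  Ideal.span ((fun a => a ^ q) '' (J : Set R))

/-- A Noetherian local ring is regular if its maximal ideal can be generated by
`d` elements, where `d` is the Krull dimension of the ring. -/
def IsRegularLocal (R : Type*) [CommRing R] [IsLocalRing R] : Prop :=
  IsNoetherianRing R ∧ ∃ s : Finset R,
    Ideal.span (s : Set R) = maximalIdeal R ∧ (s.card : WithBot ℕ∞) = ringKrullDim R

/-- `I ∈ 𝓘(S, 𝐯)`: the ideal `I` contains `𝐯S = (v₁, …, vₙ)S` and satisfies
`v^(p-1)·(I + 𝐯S) ⊆ I^{[p]} + 𝐯^p S`, where `v = v₁⋯vₙ`. -/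
def MemCalI {S : Type*} [CommRing S] (p : ℕ) {n : ℕ} (v : Fin n → S) (I : Ideal S) : Prop :=
  Ideal.span (Set.range v) ≤ I ∧
    ∀ r ∈ I ⊔ Ideal.span (Set.range v),
      (∏ i, v i) ^ (p - 1) * r ∈ I.bracketPow p ⊔ Ideal.span (Set.range fun i => v i ^ p)

/-!
The completion `R → R̂` of a Noetherian local ring is faithfully flat, so `J R̂ ∩ R = J` for
every ideal `J` of `R`. Both conditions defining `𝓘` are inclusions of ideals, each of which is
carried to the corresponding inclusion over `R̂` by extension (using that bracket powers commute
with extension in characteristic `p`) and recovered from it by contraction.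
-/

namespace Ideal

variable {R S : Type*} [CommRing R] [CommRing S]

theorem bracketPow_span (p : ℕ) [Fact p.Prime] [CharP R p] (s : Set R) :
    (span s).bracketPow p = span ((· ^ p) '' s) := by
  refine le_antisymm ?_ (span_mono (Set.image_mono subset_span))
  rw [bracketPow, span_le]
  rintro _ ⟨a, ha, rfl⟩
  change a ^ p ∈ span _
  induction ha using Submodule.span_induction with
  | mem x hx => exact subset_span ⟨x, hx, rfl⟩
  | zero => simp [zero_pow (Fact.out : p.Prime).ne_zero]
  | add x y _ _ hx hy => rw [add_pow_char]; exact add_mem hx hy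
  | smul r x _ hx => rw [smul_eq_mul, mul_pow]; exact mul_mem_left _ _ hx

theorem map_bracketPow (p : ℕ) [Fact p.Prime] [CharP S p] (f : R →+* S) (J : Ideal R) :
    (J.map f).bracketPow p = (J.bracketPow p).map f := by
  rw [map, bracketPow_span, bracketPow, map_span, ← Set.image_comp, ← Set.image_comp]
  simp only [Function.comp_def, map_pow]

theorem map_le_map_iff_of_comap_map {f : R →+* S} (hf : ∀ J : Ideal R, (J.map f).comap f = J)
    {I J : Ideal R} : I.map f ≤ J.map f ↔ I ≤ J := by
  rw [map_le_iff_le_comap, hf]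

theorem forall_mul_mem_map_iff_of_comap_map {f : R →+* S}
    (hf : ∀ J : Ideal R, (J.map f).comap f = J) (c : R) (K L : Ideal R) :
    (∀ r ∈ K.map f, f c * r ∈ L.map f) ↔ ∀ r ∈ K, c * r ∈ L := by
  rw [← span_singleton_mul_le_iff, ← span_singleton_mul_le_iff, ← Set.image_singleton,
    ← map_span, ← Ideal.map_mul, map_le_map_iff_of_comap_map hf]

end Ideal

theorem memCalI_map_iff {S T : Type*} [CommRing S] [CommRing T] (p : ℕ) [Fact p.Prime]
    [CharP T p] (f : S →+* T) (hf : ∀ J : Ideal S, (J.map f).comap f = J) {n : ℕ}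
    (v : Fin n → S) (I : Ideal S) :
    MemCalI p (fun i => f (v i)) (I.map f) ↔ MemCalI p v I := by
  have span_map : Ideal.span (Set.range fun i => f (v i)) = (Ideal.span (Set.range v)).map f := by
    rw [Ideal.map_span, ← Set.range_comp]
    rfl
  have span_pow_map : Ideal.span (Set.range fun i => f (v i) ^ p) =
      (Ideal.span (Set.range fun i => v i ^ p)).map f := by
    simp only [Ideal.map_span, ← Set.range_comp, Function.comp_def, map_pow]
  rw [MemCalI, MemCalI, span_map, span_pow_map, ← Ideal.map_sup, Ideal.map_bracketPow,
    ← Ideal.map_sup, ← map_prod, ← map_pow]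
  exact and_congr (Ideal.map_le_map_iff_of_comap_map hf)
    (Ideal.forall_mul_mem_map_iff_of_comap_map hf _ _ _)

instance AdicCompletion.faithfullyFlat_of_isNoetherianRing {R : Type*} [CommRing R]
    [IsLocalRing R] [IsNoetherianRing R] :
    Module.FaithfullyFlat R (AdicCompletion (maximalIdeal R) R) :=
  .of_flat_of_isLocalHom

theorem statement6_general {R : Type*} [CommRing R] [IsLocalRing R]
    (p : ℕ) (hp : p.Prime) [CharP R p] (hreg : IsRegularLocal R)
    {n : ℕ} (u : Fin n → R)
    (I : Ideal R) :
    MemCalI p u I ↔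
      MemCalI p
        (fun i => algebraMap R (AdicCompletion (maximalIdeal R) R) (u i))
        (I.map (algebraMap R (AdicCompletion (maximalIdeal R) R))) := by
  have : Fact p.Prime := ⟨hp⟩
  have : IsNoetherianRing R := hreg.1
  have : CharP (AdicCompletion (maximalIdeal R) R) p :=
    charP_of_injective_algebraMap (FaithfulSMul.algebraMap_injective R _) p
  exact (memCalI_map_iff p _ Ideal.comap_map_eq_self_of_faithfullyFlat u I).symm

/-- Let `R̂` be the `𝔪`-adic completion of `R`.  An ideal `I ⊇ 𝐮R`
of `R` belongs to `𝓘(R, 𝐮)` if and only if `I·R̂ ∈ 𝓘(R̂, 𝐮)`, the latter being defined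
using the images of `u₁, …, uₙ` in `R̂`. -/
theorem statement6 {R : Type*} [CommRing R] [IsLocalRing R]
    (p : ℕ) (hp : p.Prime) [CharP R p] (hreg : IsRegularLocal R)
    {n : ℕ} (u : Fin n → R) (hu : ∀ i, u i ∈ maximalIdeal R)
    (hureg : RingTheory.Sequence.IsRegular R (List.ofFn u))
    (I : Ideal R) (hI : Ideal.span (Set.range u) ≤ I) :
    MemCalI p u I ↔
      MemCalI p
        (fun i => algebraMap R (AdicCompletion (maximalIdeal R) R) (u i))
        (I.map (algebraMap R (AdicCompletion (maximalIdeal R) R))) :=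
  statement6_general p hp hreg u I
end

section
/- Let K be a field of prime characteristic p and let R be the localization of the polynomial ring K[x,y] at the maximal ideal (x,y). Then the set of ideals I of R satisfying xyR ⊆ I and (xy)^{p−1}·I ⊆ I^{[p]} + (xy)^p R is exactly {xyR, xR, yR, (x,y)R, R}. -/
namespace Ideal

variable {A : Type*} [CommRing A] {J : Ideal A}

theorem pow_mem_bracketPow {a : A} (q : ℕ) (ha : a ∈ J) : a ^ q ∈ J.bracketPow q :=
  subset_span ⟨a, ha, rfl⟩

theorem bracketPow_top (q : ℕ) : (⊤ : Ideal A).bracketPow q = ⊤ :=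
  (eq_top_iff_one _).2 (one_pow (M := A) q ▸ pow_mem_bracketPow q Submodule.mem_top)

theorem apply_mem_of_mem_bracketPow {p : ℕ} {T : A →+ A} (hT : ∀ g f, T (g ^ p * f) = g * T f)
    {z : A} (hz : z ∈ J.bracketPow p) : T z ∈ J := by
  -- `T` is not `A`-linear, so the induction has to carry an arbitrary multiplier `c`.
  suffices ∀ c, T (c * z) ∈ J by simpa using this 1
  induction hz using Submodule.span_induction with
  | mem _ h =>
    obtain ⟨a, ha, rfl⟩ := h
    intro c
    rw [mul_comm, hT]
    exact J.mul_mem_right _ ha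
  | zero => simp
  | add x y _ _ hx hy => intro c; rw [mul_add, map_add]; exact J.add_mem (hx c) (hy c)
  | smul d x _ hx => intro c; rw [smul_eq_mul, ← mul_assoc]; exact hx _

variable {M : Submonoid A} {R : Type*} [CommRing R] [Algebra A R] [IsLocalization M R]

include M in
theorem bracketPow_le_map_bracketPow_under (I : Ideal R) (q : ℕ) :
    I.bracketPow q ≤ ((I.under A).bracketPow q).map (algebraMap A R) := by
  refine span_le.2 ?_
  rintro _ ⟨r, hr, rfl⟩
  obtain ⟨a, s, rfl⟩ := IsLocalization.exists_mk'_eq M r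
  dsimp only
  rw [SetLike.mem_coe] at hr ⊢
  rw [← IsLocalization.mk'_pow, IsLocalization.mk'_mem_iff]
  exact mem_map_of_mem _ (pow_mem_bracketPow q (IsLocalization.mk'_mem_iff.1 hr))

include M in
theorem mem_under_of_pow_mem_under {p : ℕ} (hp : p ≠ 0) {T : A →+ A}
    (hT : ∀ g f, T (g ^ p * f) = g * T f) {u : A} (hu : T (u ^ (p - 1)) = 1) {I : Ideal R}
    (hI : ∀ r ∈ I, algebraMap A R u ^ (p - 1) * r ∈ I.bracketPow p) {f : A}
    (hf : f ^ p ∈ I.under A) : f ∈ I.under A := by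
  have h₁ : algebraMap A R (u ^ (p - 1) * f ^ p) ∈
      ((I.under A).bracketPow p).map (algebraMap A R) :=
    bracketPow_le_map_bracketPow_under (M := M) I p (by rw [map_mul, map_pow]; exact hI _ hf)
  obtain ⟨s, hs, hsf⟩ := (IsLocalization.algebraMap_mem_map_algebraMap_iff M _ _ _).1 h₁
  have h₂ : (s * f) ^ p * u ^ (p - 1) ∈ (I.under A).bracketPow p := by
    convert mul_mem_left _ (s ^ (p - 1)) hsf using 1
    rw [mul_pow, ← pow_sub_one_mul hp s]
    ring
  have h₃ := apply_mem_of_mem_bracketPow hT h₂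
  rw [hT, hu, mul_one, mem_comap, map_mul] at h₃
  exact (unit_mul_mem_iff_mem _ (IsLocalization.map_units R ⟨s, hs⟩)).1 h₃

end Ideal

section MemCalI

open Ideal

variable {S : Type*} [CommRing S] {p : ℕ}

theorem memCalI_const_iff {u : S} {I : Ideal S} :
    MemCalI p (fun _ : Fin 1 => u) I ↔ u ∈ I ∧ ∀ r ∈ I, u ^ (p - 1) * r ∈ I.bracketPow p := by
  simp only [MemCalI, Set.range_const, Finset.prod_const, Finset.card_univ, Fintype.card_fin,
    pow_one, span_singleton_le_iff_mem]
  refine and_congr_right fun hu => ?_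
  rw [sup_eq_left.2 (span_singleton_le_iff_mem _ |>.2 hu),
    sup_eq_left.2 (span_singleton_le_iff_mem _ |>.2 (pow_mem_bracketPow p hu))]

theorem memCalI_span {u : S} {G : Set S} (hu : u ∈ span G)
    (hG : ∀ g ∈ G, u ^ (p - 1) * g ∈ (span G).bracketPow p) :
    MemCalI p (fun _ : Fin 1 => u) (span G) := by
  refine memCalI_const_iff.2 ⟨hu, fun r hr => ?_⟩
  induction hr using Submodule.span_induction with
  | mem g hg => exact hG g hg
  | zero => simp
  | add x y _ _ hx hy => rw [mul_add]; exact add_mem hx hy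
  | smul c x _ hx => rw [smul_eq_mul, mul_left_comm]; exact mul_mem_left _ c hx

theorem memCalI_of_eq_span (hp : p ≠ 0) (x y : S) {I : Ideal S}
    (hI : I = span {x * y} ∨ I = span {x} ∨ I = span {y} ∨ I = span {x, y} ∨ I = ⊤) :
    MemCalI p (fun _ : Fin 1 => x * y) I := by
  have hx : (x * y) ^ (p - 1) * x = x ^ p * y ^ (p - 1) := by
    rw [mul_pow, mul_right_comm, pow_sub_one_mul hp]
  have hy : (x * y) ^ (p - 1) * y = y ^ p * x ^ (p - 1) := by
    rw [mul_pow, mul_assoc, pow_sub_one_mul hp, mul_comm]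
  rcases hI with rfl | rfl | rfl | rfl | rfl
  · refine memCalI_span (mem_span_singleton_self _) ?_
    rintro _ rfl
    rw [pow_sub_one_mul hp]
    exact pow_mem_bracketPow p (mem_span_singleton_self _)
  · refine memCalI_span (mem_span_singleton.2 (dvd_mul_right x y)) ?_
    rintro _ rfl
    rw [hx]
    exact mul_mem_right _ _ (pow_mem_bracketPow p (mem_span_singleton_self _))
  · refine memCalI_span (mem_span_singleton.2 (dvd_mul_left y x)) ?_
    rintro _ rfl
    rw [hy]
    exact mul_mem_right _ _ (pow_mem_bracketPow p (mem_span_singleton_self _))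
  · refine memCalI_span (mul_mem_right _ _ (subset_span (Set.mem_insert x _))) ?_
    rintro _ (rfl | rfl)
    · rw [hx]
      exact mul_mem_right _ _ (pow_mem_bracketPow p (subset_span (Set.mem_insert _ _)))
    · rw [hy]
      exact mul_mem_right _ _ (pow_mem_bracketPow p (subset_span (Set.mem_insert_of_mem _ rfl)))
  · refine memCalI_const_iff.2 ⟨Submodule.mem_top, fun _ _ => ?_⟩
    rw [bracketPow_top]
    exact Submodule.mem_top

end MemCalI

theorem exists_addMonoidHom_map_pow_mul (K : Type*) [Field K] (p : ℕ) [Fact p.Prime] [CharP K p] :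
    ∃ φ : K →+ K, φ 1 = 1 ∧ ∀ a b, φ (a ^ p * b) = a * φ b := by
  set e := (frobenius K p).rangeRestrictFieldEquiv
  obtain ⟨π, hπ⟩ :=
    (Algebra.linearMap (frobenius K p).fieldRange K).exists_leftInverse_of_injective
      (LinearMap.ker_eq_bot.2 (algebraMap (frobenius K p).fieldRange K).injective)
  have hπ' (c : (frobenius K p).fieldRange) : π c = c := LinearMap.congr_fun hπ c
  refine ⟨e.symm.toAddMonoidHom.comp π.toAddMonoidHom, ?_, fun a b => ?_⟩
  · simpa using congrArg e.symm (hπ' 1)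
  · have : a ^ p * b = e a • b := by rw [Algebra.smul_def]; rfl
    simp [this]

namespace MvPolynomial

section Cartier

variable {σ K : Type*} [Fintype σ] [Field K] (p : ℕ) (φ : K →+ K)

noncomputable def cartier : MvPolynomial σ K →+ MvPolynomial σ K :=
  AddMonoidAlgebra.liftNC ((C : K →+* MvPolynomial σ K).toAddMonoidHom.comp φ) fun m =>
    if ∀ i, m.toAdd i % p = p - 1 then
      monomial (Finsupp.mapRange (· / p) (Nat.zero_div p) m.toAdd) 1 else 0

theorem cartier_monomial (m : σ →₀ ℕ) (c : K) :
    cartier p φ (monomial m c) =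
      if ∀ i, m i % p = p - 1 then monomial (Finsupp.mapRange (· / p) (Nat.zero_div p) m) (φ c)
      else 0 := by
  rw [cartier, ← single_eq_monomial, AddMonoidAlgebra.liftNC_single]
  simp only [toAdd_ofAdd]
  split_ifs <;> simp [C_mul_monomial]

variable {p φ}

theorem cartier_prod_X_pow (hp : p ≠ 0) (hφ : φ 1 = 1) :
    cartier p φ ((∏ i, X i : MvPolynomial σ K) ^ (p - 1)) = 1 := by
  classical
  have hsum (i : σ) : (∑ j, Finsupp.single j (p - 1)) i = p - 1 := by
    rw [Finsupp.finsetSum_apply,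
      Finset.sum_eq_single i (fun j _ hj => Finsupp.single_eq_of_ne hj.symm) (by simp),
      Finsupp.single_eq_same]
  have hshrink :
      Finsupp.mapRange (· / p) (Nat.zero_div p) (∑ j : σ, Finsupp.single j (p - 1)) = 0 := by
    ext i
    simp only [Finsupp.mapRange_apply, hsum, Nat.div_eq_of_lt (Nat.sub_one_lt hp),
      Finsupp.coe_zero, Pi.zero_apply]
  rw [← Finset.prod_pow]
  simp_rw [X_pow_eq_monomial]
  rw [← monomial_sum_one, cartier_monomial,
    if_pos fun i => by rw [hsum, Nat.mod_eq_of_lt (Nat.sub_one_lt hp)], hφ, hshrink,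
    monomial_zero', C_1]

theorem cartier_pow_mul [Fact p.Prime] [CharP K p] (hφ : ∀ a b, φ (a ^ p * b) = a * φ b)
    (g f : MvPolynomial σ K) : cartier p φ (g ^ p * f) = g * cartier p φ f := by
  have hp : 0 < p := (Fact.out : p.Prime).pos
  induction g using MvPolynomial.induction_on' with
  | add g₁ g₂ h₁ h₂ => rw [add_pow_char, add_mul, map_add, h₁, h₂, add_mul]
  | monomial n d =>
    induction f using MvPolynomial.induction_on' with
    | add f₁ f₂ h₁ h₂ => rw [mul_add, map_add, h₁, h₂, map_add, mul_add]
    | monomial m c =>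
      have hmod (i : σ) : (p • n + m) i % p = m i % p := Nat.mul_add_mod ..
      rw [monomial_pow, monomial_mul, cartier_monomial, cartier_monomial]
      simp only [hmod]
      split_ifs
      · have hdiv : Finsupp.mapRange (· / p) (Nat.zero_div p) (p • n + m) =
            n + Finsupp.mapRange (· / p) (Nat.zero_div p) m := by
          ext i
          exact Nat.mul_add_div hp ..
        rw [monomial_mul, hφ, hdiv]
      · rw [mul_zero]

end Cartier

theorem sub_aeval_mem {σ R : Type*} [CommRing R] {N : Ideal (MvPolynomial σ R)}
    {v : σ → MvPolynomial σ R} (hv : ∀ i, X i - v i ∈ N) (f : MvPolynomial σ R) :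
    f - aeval v f ∈ N := by
  rw [← Ideal.Quotient.eq]
  have : Ideal.Quotient.mkₐ R N = (Ideal.Quotient.mkₐ R N).comp (aeval v) :=
    algHom_ext fun i => by simpa [Ideal.Quotient.eq] using hv i
  exact congr($this f)

theorem X_mul_X_dvd {σ R : Type*} [CommRing R] [IsDomain R] {i j : σ} (hij : i ≠ j)
    {f : MvPolynomial σ R} (hi : X i ∣ f) (hj : X j ∣ f) : X i * X j ∣ f := by
  obtain ⟨g, rfl⟩ := hi
  refine mul_dvd_mul_left _ (((X_prime (R := R)).dvd_or_dvd hj).resolve_left ?_)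
  rw [X_dvd_X]
  exact hij.symm

section TwoVariables

variable {K : Type*} [Field K] {J : Ideal (MvPolynomial (Fin 2) K)}

theorem exists_aeval_X_eq_X_pow_mul {i : Fin 2} {q : Polynomial K} (hq : q ≠ 0) :
    ∃ k, ∃ s ∉ (Ideal.span {X 0, X 1} : Ideal (MvPolynomial (Fin 2) K)),
      Polynomial.aeval (X i) q = X i ^ k * s := by
  obtain ⟨q', hq_eq, hq'⟩ := q.exists_eq_pow_rootMultiplicity_mul_and_not_dvd hq 0
  rw [map_zero, sub_zero] at hq_eq hq'
  refine ⟨_, Polynomial.aeval (X i) q', fun hmem => hq' ?_,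
    by rw [hq_eq, map_mul, map_pow, Polynomial.aeval_X]⟩
  have hker : (Ideal.span {X 0, X 1} : Ideal (MvPolynomial (Fin 2) K)) ≤
      RingHom.ker (aeval (0 : Fin 2 → K)) := by
    rw [Ideal.span_le]
    rintro _ (rfl | rfl) <;> simp
  have h0 : aeval (0 : Fin 2 → K) (Polynomial.aeval (X i) q') = 0 := hker hmem
  rw [← Polynomial.aeval_algHom_apply, aeval_X, Pi.zero_apply] at h0
  exact Polynomial.X_dvd_iff.2 ((Polynomial.coeff_zero_eq_aeval_zero q').trans h0)

theorem X_mem_or_X_dvd_of_mem (hrad : J.IsRadical)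
    (hsat : ∀ s ∉ Ideal.span {X 0, X 1}, ∀ f, s * f ∈ J → f ∈ J) {i j : Fin 2} (hij : i ≠ j)
    (hXX : X i * X j ∈ J) {f : MvPolynomial (Fin 2) K} (hf : f ∈ J) : X i ∈ J ∨ X j ∣ f := by
  -- `ι (aeval ν f)` is `f` with `X j` replaced by `0`, seen as a polynomial in `X i`.
  set ν : Fin 2 → Polynomial K := fun k => if k = j then 0 else Polynomial.X
  set ι : Polynomial K →ₐ[K] MvPolynomial (Fin 2) K := Polynomial.aeval (X i)
  have hfg : X j ∣ f - ι (aeval ν f) := by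
    refine Ideal.mem_span_singleton.1 ?_
    rw [comp_aeval_apply]
    refine sub_aeval_mem (fun k => ?_) f
    by_cases hk : k = j
    · simp [ν, hk]
    · obtain rfl : k = i := by omega
      simp [ν, ι, hk]
  obtain hq | hq := eq_or_ne (aeval ν f) 0
  · exact .inr (by simpa [hq] using hfg)
  obtain ⟨k, s, hs, hks⟩ := exists_aeval_X_eq_X_pow_mul (i := i) hq
  obtain ⟨h, hh⟩ := hfg
  have hmem : s * X i ^ (k + 1) = X i * f - X i * X j * h := by
    rw [hks] at hh
    linear_combination (-X i) * hh
  refine .inl (hrad ⟨k + 1, hsat s hs _ ?_⟩)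
  rw [hmem]
  exact J.sub_mem (J.mul_mem_left _ hf) (J.mul_mem_right _ hXX)

theorem eq_span_of_isRadical (hrad : J.IsRadical)
    (hsat : ∀ s ∉ Ideal.span {X 0, X 1}, ∀ f, s * f ∈ J → f ∈ J) (hXX : X 0 * X 1 ∈ J)
    (hle : J ≤ Ideal.span {X 0, X 1}) :
    J = Ideal.span {X 0 * X 1} ∨ J = Ideal.span {X 0} ∨ J = Ideal.span {X 1} ∨
      J = Ideal.span {X 0, X 1} := by
  have h₀ {f} (hf : f ∈ J) := X_mem_or_X_dvd_of_mem hrad hsat zero_ne_one hXX hf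
  have h₁ {f} (hf : f ∈ J) :=
    X_mem_or_X_dvd_of_mem hrad hsat one_ne_zero (by rwa [mul_comm]) hf
  by_cases hx : X 0 ∈ J <;> by_cases hy : X 1 ∈ J
  · refine .inr <| .inr <| .inr <| le_antisymm hle (Ideal.span_le.2 ?_)
    rintro _ (rfl | rfl) <;> assumption
  · refine .inr <| .inl <| le_antisymm (fun f hf => ?_) (Ideal.span_singleton_le_iff_mem _ |>.2 hx)
    exact Ideal.mem_span_singleton.2 ((h₁ hf).resolve_left hy)
  · refine .inr <| .inr <| .inl <| le_antisymm (fun f hf => ?_)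
      (Ideal.span_singleton_le_iff_mem _ |>.2 hy)
    exact Ideal.mem_span_singleton.2 ((h₀ hf).resolve_left hx)
  · refine .inl <| le_antisymm (fun f hf => ?_) (Ideal.span_singleton_le_iff_mem _ |>.2 hXX)
    exact Ideal.mem_span_singleton.2
      (X_mul_X_dvd zero_ne_one ((h₁ hf).resolve_left hy) ((h₀ hf).resolve_left hx))

end TwoVariables

end MvPolynomial

section Localization

open MvPolynomial

variable {K : Type*} [Field K] [(Ideal.span {X 0, X 1} : Ideal (MvPolynomial (Fin 2) K)).IsPrime]

local notation "𝔪" => (Ideal.span {X 0, X 1} : Ideal (MvPolynomial (Fin 2) K))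
local notation "ℓ" => algebraMap (MvPolynomial (Fin 2) K) (Localization.AtPrime 𝔪)

theorem eq_of_memCalI (p : ℕ) [hp : Fact p.Prime] [CharP K p]
    {I : Ideal (Localization.AtPrime 𝔪)} (hI : MemCalI p (fun _ : Fin 1 => ℓ (X 0) * ℓ (X 1)) I) :
    I = Ideal.span {ℓ (X 0) * ℓ (X 1)} ∨ I = Ideal.span {ℓ (X 0)} ∨ I = Ideal.span {ℓ (X 1)} ∨
      I = Ideal.span {ℓ (X 0), ℓ (X 1)} ∨ I = ⊤ := by
  obtain ⟨hu, hI⟩ := memCalI_const_iff.1 hI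
  rw [← map_mul] at hu hI
  by_cases htop : I = ⊤
  · exact .inr <| .inr <| .inr <| .inr htop
  obtain ⟨φ, hφ₁, hφ⟩ := exists_addMonoidHom_map_pow_mul K p
  have hcartier : cartier p φ ((X 0 * X 1 : MvPolynomial (Fin 2) K) ^ (p - 1)) = 1 := by
    rw [← Fin.prod_univ_two (X : Fin 2 → MvPolynomial (Fin 2) K),
      cartier_prod_X_pow hp.out.ne_zero hφ₁]
  have hrad : (I.under _).IsRadical := (Ideal.isRadical_iff_pow_one_lt p hp.out.one_lt).2
    fun f hf => Ideal.mem_under_of_pow_mem_under (M := (𝔪).primeCompl) hp.out.ne_zero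
      (cartier_pow_mul hφ) hcartier hI hf
  have hunit (s) (hs : s ∉ 𝔪) : IsUnit (ℓ s) :=
    IsLocalization.map_units _ (⟨s, hs⟩ : (𝔪).primeCompl)
  have hsat (s) (hs : s ∉ 𝔪) (f) (h : s * f ∈ I.under _) : f ∈ I.under _ :=
    (Ideal.unit_mul_mem_iff_mem _ (hunit s hs)).1 (by simpa using h)
  have hle : I.under _ ≤ 𝔪 := fun f hf =>
    by_contra fun h => htop (Ideal.eq_top_of_isUnit_mem _ hf (hunit f h))
  have hmap := IsLocalization.map_under (𝔪).primeCompl (Localization.AtPrime 𝔪) I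
  rcases eq_span_of_isRadical hrad hsat hu hle with h | h | h | h <;>
    rw [h, Ideal.map_span] at hmap <;> simp [← hmap, Set.image_pair]

end Localization

open MvPolynomial in
/-- Let `K` be a field of prime characteristic `p` and let `R` be the
localization of `K[x,y]` at the maximal ideal `(x,y)`.  Then the set of ideals `I` of
`R` with `xyR ⊆ I` and `(xy)^(p-1)·(I + xyR) ⊆ I^{[p]} + (xy)^p R` (i.e. the set
`𝓘(R, xy)`) is exactly `{xyR, xR, yR, (x,y)R, R}`. -/
theorem statement14 (K : Type*) [Field K] (p : ℕ) (hp : p.Prime) [CharP K p]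
    [hP : (Ideal.span {X 0, X 1} : Ideal (MvPolynomial (Fin 2) K)).IsPrime] :
    {I : Ideal (Localization.AtPrime
          (Ideal.span {X 0, X 1} : Ideal (MvPolynomial (Fin 2) K))) |
        MemCalI p (fun _ : Fin 1 =>
          algebraMap (MvPolynomial (Fin 2) K) _ (X 0) *
            algebraMap (MvPolynomial (Fin 2) K) _ (X 1)) I} =
      {Ideal.span {algebraMap (MvPolynomial (Fin 2) K) _ (X 0) *
          algebraMap (MvPolynomial (Fin 2) K) _ (X 1)},
        Ideal.span {algebraMap (MvPolynomial (Fin 2) K) _ (X 0)},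
        Ideal.span {algebraMap (MvPolynomial (Fin 2) K) _ (X 1)},
        Ideal.span {algebraMap (MvPolynomial (Fin 2) K) _ (X 0),
          algebraMap (MvPolynomial (Fin 2) K) _ (X 1)},
        ⊤} := by
  have : Fact p.Prime := ⟨hp⟩
  ext I
  simp only [Set.mem_ofPred_eq, Set.mem_insert_iff, Set.mem_singleton_iff]
  exact ⟨eq_of_memCalI p, memCalI_of_eq_span hp.ne_zero _ _⟩
end
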